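/- Let $T$ be a finite tree rooted at $v_0$. There exists an injection $\iota$ from $E(\lfloor T/2 \rfloor)$ into $E(T) \setminus E(\lceil T/2 \rceil)$; consequently $e(T) - e(\lceil T/2 \rceil) \geq e(\lfloor T/2 \rfloor)$. -/

import Mathlib

open Classical

noncomputable section

/-- The infinite hypercube: vertices are `ℕ → Bool`, adjacent iff they differ
in exactly one coordinate. -/
def Qinf : SimpleGraph (ℕ → Bool) where
  Adj x y := ∃ i, x i ≠ y i ∧ ∀ j, j ≠ i → x j = y j
  symm := by
    constructor
    rintro x y ⟨i, h1, h2⟩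
    exact ⟨i, h1.symm, fun j hj => (h2 j hj).symm⟩
  loopless := by
    constructor
    rintro x ⟨i, h1, -⟩
    exact h1 rfl

/-- The coordinate of an edge `xy` of the infinite hypercube. -/
def coordOf (x y : ℕ → Bool) : ℕ := sInf {i | x i ≠ y i}

lemma coordOf_symm (x y : ℕ → Bool) : coordOf x y = coordOf y x := by
  unfold coordOf
  congr 1
  ext i
  exact ne_comm

def ecoord {α : Type*} (g : α → ℕ → Bool) : Sym2 α → ℕ :=
  Sym2.lift ⟨fun a b => coordOf (g a) (g b), fun a b => coordOf_symm _ _⟩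

/-- degree as the cardinality of the neighbor set -/
def degOf {V : Type*} (G : SimpleGraph V) (v : V) : ℕ := (G.neighborSet v).ncard

/-- `w` is a descendant of `v` in the tree `T` rooted at `root`. -/
def Desc {V : Type*} (T : SimpleGraph V) (root v w : V) : Prop :=
  T.dist root v + T.dist v w = T.dist root w

/-- the largest level among descendants of `v` -/
def lamMax {V : Type*} [Fintype V] (T : SimpleGraph V) (root v : V) : ℕ :=
  Finset.univ.sup fun w => if Desc T root v w then T.dist root w else 0

/-- the vertex set of `⌊T/2⌋` -/
def halfFloor {V : Type*} [Fintype V] (T : SimpleGraph V) (root : V) : Set V :=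
  {v | T.dist root v ≤ lamMax T root v / 2}

/-- the vertex set of `⌈T/2⌉` -/
def halfCeil {V : Type*} [Fintype V] (T : SimpleGraph V) (root : V) : Set V :=
  {v | T.dist root v ≤ (lamMax T root v + 1) / 2}

/-- the number of edges of `T` with both endpoints in `S` -/
def edgesIn {V : Type*} (T : SimpleGraph V) (S : Set V) : ℕ :=
  {e ∈ T.edgeSet | ∀ x ∈ e, x ∈ S}.ncard

/-- a leaf of the rooted tree: a non-root vertex with no descendant other than itself -/
def IsRootLeaf {V : Type*} (T : SimpleGraph V) (root v : V) : Prop :=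
  v ≠ root ∧ ∀ w, Desc T root v w → w = v

/-- path-distinctness of the map `g` on the vertex set `S` of a rooted tree:
for every vertex of `S`, the edges of the path from the root get distinct coordinates -/
def PathDistinctOn {V : Type*} (T : SimpleGraph V) (root : V)
    (S : Set V) (g : V → ℕ → Bool) : Prop :=
  ∀ v ∈ S, ∀ p : T.Walk root v, p.IsPath →
    (p.edges.map (ecoord g)).Pairwise (· ≠ ·)

namespace Stmt19Aux

open SimpleGraph Walk

variable {V : Type*}

lemma length_drop {G : SimpleGraph V} {u v : V} (p : G.Walk u v) (n : ℕ) :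
    (p.drop n).length = p.length - n := by
  induction p generalizing n with
  | nil => cases n <;> simp [Walk.drop]
  | cons h q ih =>
    cases n with
    | zero => simp [Walk.drop]
    | succ n => simp [Walk.drop, ih]

lemma getVert_drop {G : SimpleGraph V} {u v : V} (p : G.Walk u v) (n i : ℕ) :
    (p.drop n).getVert i = p.getVert (n + i) := by
  induction p generalizing n with
  | nil => cases n <;> simp [Walk.drop, Walk.getVert]
  | cons h q ih =>
    cases n with
    | zero => simp [Walk.drop]
    | succ n =>
      simp [Walk.drop, ih, Nat.succ_add]

lemma isPath_drop {G : SimpleGraph V} {u v : V} {p : G.Walk u v} (hp : p.IsPath) (n : ℕ) :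
    (p.drop n).IsPath := by
  induction p generalizing n with
  | nil => cases n <;> simp [Walk.drop]
  | cons h q ih =>
    cases n with
    | zero => simpa [Walk.drop] using hp
    | succ n => simpa [Walk.drop] using ih hp.of_cons n

variable {T : SimpleGraph V} (hT : T.IsTree) {root : V}

include hT

lemma path_length {a b : V} {p : T.Walk a b} (hp : p.IsPath) : p.length = T.dist a b := by
  refine le_antisymm ?_ (SimpleGraph.dist_le p)
  obtain ⟨q, hq⟩ := p.reachable.exists_walk_length_eq_dist
  have hqb := q.bypass_isPath
  have heq : q.bypass = p := (hT.existsUnique_path a b).unique hqb hp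
  calc p.length = q.bypass.length := by rw [heq]
    _ ≤ q.length := q.length_bypass_le
    _ = T.dist a b := hq

lemma isPath_of_length_eq_dist {a b : V} (q : T.Walk a b) (h : q.length = T.dist a b) :
    q.IsPath := by
  have h1 : q.length ≤ q.bypass.length := h ▸ SimpleGraph.dist_le q.bypass
  rw [← Walk.bypass_eq_self_of_length_le q h1]
  exact q.bypass_isPath

lemma dist_getVert_right {a b : V} {p : T.Walk a b} (hp : p.IsPath) (k : ℕ) :
    T.dist (p.getVert k) b = p.length - k := by
  have h := path_length hT (isPath_drop hp k)
  rw [← h, length_drop]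

lemma dist_getVert_left {a b : V} {p : T.Walk a b} (hp : p.IsPath) {k : ℕ}
    (hk : k ≤ p.length) : T.dist a (p.getVert k) = k := by
  have h := dist_getVert_right hT hp.reverse (p.length - k)
  rw [Walk.getVert_reverse, Nat.sub_sub_self hk, Walk.length_reverse] at h
  rw [SimpleGraph.dist_comm, h, Nat.sub_sub_self hk]

lemma desc_of_mem_support {v w : V} {p : T.Walk root w} (hp : p.IsPath)
    (hv : v ∈ p.support) : Desc T root v w := by
  obtain ⟨i, hiv, hil⟩ := Walk.mem_support_iff_exists_getVert.mp hv
  subst hiv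
  unfold Desc
  rw [dist_getVert_left hT hp hil, dist_getVert_right hT hp, ← path_length hT hp]
  omega

lemma desc_getVert {v w : V} (hd : Desc T root v w) {p : T.Walk root w} (hp : p.IsPath) :
    p.getVert (T.dist root v) = v := by
  obtain ⟨p1, hp1, -⟩ := hT.existsUnique_path root v
  obtain ⟨p2, hp2, -⟩ := hT.existsUnique_path v w
  have hlen : (p1.append p2).length = T.dist root w := by
    rw [Walk.length_append, path_length hT hp1, path_length hT hp2]
    exact hd
  have hq : (p1.append p2).IsPath := isPath_of_length_eq_dist hT _ hlen
  have hqp : p1.append p2 = p := (hT.existsUnique_path root w).unique hq hp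
  have hv : (p1.append p2).getVert p1.length = v := by
    rw [Walk.getVert_append]
    simp [Walk.getVert_zero]
  rw [← hqp, ← path_length hT hp1, hv]

lemma desc_trans {u v w : V} (h1 : Desc T root u v) (h2 : Desc T root v w) :
    Desc T root u w := by
  have tA := hT.isConnected.dist_triangle (u := root) (v := u) (w := w)
  have tB := hT.isConnected.dist_triangle (u := u) (v := v) (w := w)
  unfold Desc at *
  omega

lemma adj_level {u v : V} (h : T.Adj u v) :
    (Desc T root u v ∧ T.dist root v = T.dist root u + 1) ∨
    (Desc T root v u ∧ T.dist root u = T.dist root v + 1) := by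
  obtain ⟨p, hp, -⟩ := hT.existsUnique_path root u
  by_cases hv : v ∈ p.support
  · right
    have hd := desc_of_mem_support hT hp hv
    have h1 : T.dist v u = 1 := SimpleGraph.dist_eq_one_iff_adj.mpr h.symm
    refine ⟨hd, ?_⟩
    unfold Desc at hd
    omega
  · left
    have hc : (Walk.cons h.symm p.reverse).IsPath :=
      hp.reverse.cons (by simpa using hv)
    have hpe : p.concat h = (Walk.cons h.symm p.reverse).reverse := by
      rw [Walk.reverse_cons, Walk.reverse_reverse, Walk.concat_eq_append]
    have hq : (p.concat h).IsPath := by rw [hpe]; exact hc.reverse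
    have hl : T.dist root v = T.dist root u + 1 := by
      rw [← path_length hT hq, Walk.length_concat, path_length hT hp]
    have h1 : T.dist u v = 1 := SimpleGraph.dist_eq_one_iff_adj.mpr h
    exact ⟨by unfold Desc; omega, hl⟩

omit hT

variable [Fintype V]

lemma desc_refl (v : V) : Desc T root v v := by simp [Desc]

lemma le_lamMax {v w : V} (h : Desc T root v w) : T.dist root w ≤ lamMax T root v := by
  have := Finset.le_sup (f := fun w => if Desc T root v w then T.dist root w else 0)
    (Finset.mem_univ w)
  simp only [if_pos h] at this
  exact this

lemma self_le_lamMax (v : V) : T.dist root v ≤ lamMax T root v :=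
  le_lamMax (desc_refl v)

lemma lamMax_le {v : V} {n : ℕ} (h : ∀ w, Desc T root v w → T.dist root w ≤ n) :
    lamMax T root v ≤ n :=
  Finset.sup_le fun w _ => by
    split_ifs with hd
    · exact h w hd
    · exact Nat.zero_le n

lemma exists_deep (v : V) : ∃ w, Desc T root v w ∧ T.dist root w = lamMax T root v := by
  obtain ⟨w, -, hw⟩ := Finset.exists_mem_eq_sup Finset.univ ⟨v, Finset.mem_univ v⟩
    (fun w => if Desc T root v w then T.dist root w else 0)
  have hw' : lamMax T root v = if Desc T root v w then T.dist root w else 0 := hw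
  by_cases hd : Desc T root v w
  · exact ⟨w, hd, by rw [hw', if_pos hd]⟩
  · refine ⟨v, desc_refl v, ?_⟩
    have h0 : lamMax T root v = 0 := by rw [hw', if_neg hd]
    have h1 := self_le_lamMax (T := T) (root := root) v
    omega


section Construction

variable {T : SimpleGraph V} (hT : T.IsTree) {root : V}

/-- the canonical path between two vertices of a tree -/
def pathTo (hT : T.IsTree) (a b : V) : T.Walk a b := (hT.existsUnique_path a b).choose

lemma pathTo_isPath (a b : V) : (pathTo hT a b).IsPath :=
  (hT.existsUnique_path a b).choose_spec.1

variable [Fintype V]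

/-- a deepest descendant of `v` -/
def deepOf (T : SimpleGraph V) (root v : V) : V := (exists_deep (T := T) (root := root) v).choose

lemma deepOf_desc (v : V) : Desc T root v (deepOf T root v) :=
  (exists_deep v).choose_spec.1

lemma deepOf_dist (v : V) : T.dist root (deepOf T root v) = lamMax T root v :=
  (exists_deep v).choose_spec.2

/-- the image edge assigned to the deeper endpoint `v` of a floor edge -/
def fmap (hT : T.IsTree) (root v : V) : Sym2 V :=
  s((pathTo hT root (deepOf T root v)).getVert (lamMax T root v - T.dist root v),
    (pathTo hT root (deepOf T root v)).getVert (lamMax T root v - T.dist root v + 1))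

/-- `v` is a valid deeper endpoint of a floor edge -/
def Good (T : SimpleGraph V) (root v : V) : Prop :=
  1 ≤ T.dist root v ∧ 2 * T.dist root v ≤ lamMax T root v

lemma fmap_spec {v : V} (hv : Good T root v) :
    fmap hT root v ∈ T.edgeSet ∧
    (let x := (pathTo hT root (deepOf T root v)).getVert (lamMax T root v - T.dist root v + 1)
     x ∈ fmap hT root v ∧ x ∉ halfCeil T root ∧
     T.dist root x = lamMax T root v - T.dist root v + 1 ∧
     lamMax T root x = lamMax T root v ∧ Desc T root v x) := by
  obtain ⟨h1, h2⟩ := hv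
  set L := lamMax T root v with hL
  set l := T.dist root v with hl
  set q := pathTo hT root (deepOf T root v) with hq
  have hqp : q.IsPath := pathTo_isPath hT _ _
  have hqlen : q.length = L := by
    rw [path_length hT hqp, deepOf_dist]
  set k := L - l + 1 with hk
  have hlL : l ≤ L := le_trans (by omega) h2
  have hkL : k ≤ L := by omega
  set x := q.getVert k with hx
  have hxd : T.dist root x = k := dist_getVert_left hT hqp (by omega)
  -- the edge
  have hadj : T.Adj (q.getVert (L - l)) (q.getVert (L - l + 1)) :=
    q.adj_getVert_succ (by omega)
  have hedge : fmap hT root v ∈ T.edgeSet := by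
    simpa [fmap, SimpleGraph.mem_edgeSet] using hadj
  -- v on the path
  have hvq : q.getVert l = v := desc_getVert hT (deepOf_desc v) hqp
  -- Desc root v x
  have hdesc_vx : Desc T root v x := by
    have hdrop : (q.drop l).IsPath := isPath_drop hqp l
    have hgl : (q.drop l).getVert (k - l) = x := by
      rw [getVert_drop]
      congr 1
      omega
    have hdl : (q.drop l).length = L - l := by rw [length_drop]; omega
    have := dist_getVert_left hT hdrop (k := k - l) (by omega)
    rw [hgl] at this
    unfold Desc
    rw [hxd, ← hl]
    rw [hvq] at this
    rw [this]
    omega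
  -- lamMax x = L
  have hxmem : x ∈ q.support := Walk.mem_support_iff_exists_getVert.mpr ⟨k, rfl, by omega⟩
  have hdesc_xd : Desc T root x (deepOf T root v) := desc_of_mem_support hT hqp hxmem
  have hge : L ≤ lamMax T root x := by
    have := le_lamMax hdesc_xd
    rwa [deepOf_dist] at this
  have hle : lamMax T root x ≤ L := lamMax_le fun w hw =>
    le_lamMax (desc_trans hT hdesc_vx hw)
  have hlam : lamMax T root x = L := le_antisymm hle hge
  refine ⟨hedge, ?_, ?_, hxd, hlam, hdesc_vx⟩
  · exact Sym2.mem_mk_right _ _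
  · intro hmem
    have : T.dist root x ≤ (lamMax T root x + 1) / 2 := hmem
    rw [hxd, hlam] at this
    omega

lemma fmap_inj {v1 v2 : V} (h1 : Good T root v1) (h2 : Good T root v2)
    (heq : fmap hT root v1 = fmap hT root v2) : v1 = v2 := by
  obtain ⟨-, -, -, hd1, hl1, hdesc1⟩ := fmap_spec hT h1
  obtain ⟨-, -, -, hd2, hl2, hdesc2⟩ := fmap_spec hT h2
  -- (hypotheses already in explicit form)
  have hq1 : (pathTo hT root (deepOf T root v1)).IsPath := pathTo_isPath hT _ _
  have hq2 : (pathTo hT root (deepOf T root v2)).IsPath := pathTo_isPath hT _ _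
  have hq1len : (pathTo hT root (deepOf T root v1)).length = lamMax T root v1 := by
    rw [path_length hT hq1, deepOf_dist]
  have hq2len : (pathTo hT root (deepOf T root v2)).length = lamMax T root v2 := by
    rw [path_length hT hq2, deepOf_dist]
  have hl1L : T.dist root v1 ≤ lamMax T root v1 := le_trans (by omega) h1.2
  have hl2L : T.dist root v2 ≤ lamMax T root v2 := le_trans (by omega) h2.2
  have ha1 : T.dist root ((pathTo hT root (deepOf T root v1)).getVert
      (lamMax T root v1 - T.dist root v1)) = lamMax T root v1 - T.dist root v1 :=
    dist_getVert_left hT hq1 (by omega)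
  have ha2 : T.dist root ((pathTo hT root (deepOf T root v2)).getVert
      (lamMax T root v2 - T.dist root v2)) = lamMax T root v2 - T.dist root v2 :=
    dist_getVert_left hT hq2 (by omega)
  unfold fmap at heq
  rw [Sym2.eq_iff] at heq
  rcases heq with ⟨hA, hB⟩ | ⟨hA, hB⟩
  · -- straight case : the two deeper image endpoints coincide
    have hLeq : lamMax T root v1 = lamMax T root v2 := by rw [← hl1, hB, hl2]
    have hkeq : lamMax T root v1 - T.dist root v1 + 1
        = lamMax T root v2 - T.dist root v2 + 1 := by rw [← hd1, hB, hd2]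
    have hleq : T.dist root v1 = T.dist root v2 := by omega
    obtain ⟨p, hp, -⟩ := hT.existsUnique_path root
      ((pathTo hT root (deepOf T root v2)).getVert (lamMax T root v2 - T.dist root v2 + 1))
    rw [hB] at hdesc1
    have e1 : p.getVert (T.dist root v1) = v1 := desc_getVert hT hdesc1 hp
    have e2 : p.getVert (T.dist root v2) = v2 := desc_getVert hT hdesc2 hp
    rw [hleq] at e1
    exact e1.symm.trans e2
  · -- cross case : impossible by levels
    exfalso
    have c1 : lamMax T root v1 - T.dist root v1
        = lamMax T root v2 - T.dist root v2 + 1 := by rw [← ha1, hA, hd2]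
    have c2 : lamMax T root v1 - T.dist root v1 + 1
        = lamMax T root v2 - T.dist root v2 := by rw [← hd1, hB, ha2]
    omega


end Construction

lemma exists_max (T : SimpleGraph V) (root : V) (e : Sym2 V) :
    ∃ v, v ∈ e ∧ ∀ u ∈ e, T.dist root u ≤ T.dist root v := by
  induction e using Sym2.ind with
  | _ a b =>
    rcases le_total (T.dist root a) (T.dist root b) with h | h
    · exact ⟨b, Sym2.mem_mk_right a b, fun u hu => by
        rcases Sym2.mem_iff.mp hu with rfl | rfl
        · exact h
        · exact le_rfl⟩
    · exact ⟨a, Sym2.mem_mk_left a b, fun u hu => by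
        rcases Sym2.mem_iff.mp hu with rfl | rfl
        · exact le_rfl
        · exact h⟩

/-- the endpoint of an edge farthest from the root -/
def pickDeep (T : SimpleGraph V) (root : V) (e : Sym2 V) : V :=
  (exists_max T root e).choose

lemma pickDeep_mem (T : SimpleGraph V) (root : V) (e : Sym2 V) : pickDeep T root e ∈ e :=
  (exists_max T root e).choose_spec.1

lemma pickDeep_max (T : SimpleGraph V) (root : V) (e : Sym2 V) :
    ∀ u ∈ e, T.dist root u ≤ T.dist root (pickDeep T root e) :=
  (exists_max T root e).choose_spec.2

variable [Fintype V] {T : SimpleGraph V} {root : V}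

/-- structure of a floor edge -/
lemma floor_edge_struct (hT : T.IsTree) {e : Sym2 V}
    (he : e ∈ T.edgeSet) (hfl : ∀ x ∈ e, x ∈ halfFloor T root) :
    ∃ u, e = s(u, pickDeep T root e) ∧ Desc T root u (pickDeep T root e) ∧
      T.dist root (pickDeep T root e) = T.dist root u + 1 ∧
      Good T root (pickDeep T root e) := by
  induction e using Sym2.ind with
  | _ a b =>
    have hadj : T.Adj a b := he
    have hab : a ≠ b := hadj.ne
    -- identify the deeper endpoint
    rcases adj_level hT (root := root) hadj with ⟨hd, hl⟩ | ⟨hd, hl⟩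
    · -- b is deeper
      have hpick : pickDeep T root s(a, b) = b := by
        rcases Sym2.mem_iff.mp (pickDeep_mem T root s(a, b)) with h | h
        · exfalso
          have := pickDeep_max T root s(a, b) b (Sym2.mem_mk_right a b)
          rw [h] at this
          omega
        · exact h
      refine ⟨a, by rw [hpick], by rw [hpick]; exact hd, by rw [hpick]; exact hl, ?_⟩
      rw [hpick]
      have hbf : b ∈ halfFloor T root := hfl b (Sym2.mem_mk_right a b)
      have hb2 : T.dist root b ≤ lamMax T root b / 2 := hbf
      exact ⟨by omega, by omega⟩
    · -- a is deeper
      have hpick : pickDeep T root s(a, b) = a := by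
        rcases Sym2.mem_iff.mp (pickDeep_mem T root s(a, b)) with h | h
        · exact h
        · exfalso
          have := pickDeep_max T root s(a, b) a (Sym2.mem_mk_left a b)
          rw [h] at this
          omega
      refine ⟨b, by rw [hpick, Sym2.eq_swap], by rw [hpick]; exact hd,
        by rw [hpick]; exact hl, ?_⟩
      rw [hpick]
      have haf : a ∈ halfFloor T root := hfl a (Sym2.mem_mk_left a b)
      have ha2 : T.dist root a ≤ lamMax T root a / 2 := haf
      exact ⟨by omega, by omega⟩

end Stmt19Aux

open Stmt19Aux

/-- there is an injection from the edges of `⌊T/2⌋` into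
`E(T) \ E(⌈T/2⌉)`; consequently `e(T) - e(⌈T/2⌉) ≥ e(⌊T/2⌋)`. -/
theorem stmt_19 {V : Type*} [Fintype V] (T : SimpleGraph V) (hT : T.IsTree) (root : V) :
    (∃ ι : Sym2 V → Sym2 V,
      Set.MapsTo ι {e ∈ T.edgeSet | ∀ x ∈ e, x ∈ halfFloor T root}
        (T.edgeSet \ {e | ∀ x ∈ e, x ∈ halfCeil T root}) ∧
      Set.InjOn ι {e ∈ T.edgeSet | ∀ x ∈ e, x ∈ halfFloor T root}) ∧
    edgesIn T (halfFloor T root) + edgesIn T (halfCeil T root) ≤ T.edgeSet.ncard := by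
  have hfinV : Finite (Sym2 V) := by infer_instance
  set ι : Sym2 V → Sym2 V := fun e => fmap hT root (pickDeep T root e) with hι
  have hmaps : Set.MapsTo ι {e ∈ T.edgeSet | ∀ x ∈ e, x ∈ halfFloor T root}
      (T.edgeSet \ {e | ∀ x ∈ e, x ∈ halfCeil T root}) := by
    rintro e ⟨he, hfl⟩
    obtain ⟨u, -, -, -, hgood⟩ := floor_edge_struct hT he hfl
    obtain ⟨hedge, hx, hxc, -, -, -⟩ := fmap_spec hT hgood
    exact ⟨hedge, fun hall => hxc (hall _ hx)⟩
  have hinj : Set.InjOn ι {e ∈ T.edgeSet | ∀ x ∈ e, x ∈ halfFloor T root} := by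
    rintro e1 ⟨he1, hfl1⟩ e2 ⟨he2, hfl2⟩ heq
    obtain ⟨u1, hu1e, hu1d, hu1l, hgood1⟩ := floor_edge_struct hT he1 hfl1
    obtain ⟨u2, hu2e, hu2d, hu2l, hgood2⟩ := floor_edge_struct hT he2 hfl2
    have hv : pickDeep T root e1 = pickDeep T root e2 := fmap_inj hT hgood1 hgood2 heq
    rw [hv] at hu1d hu1l
    obtain ⟨p, hp, -⟩ := hT.existsUnique_path root (pickDeep T root e2)
    have e1' : p.getVert (T.dist root u1) = u1 := desc_getVert hT hu1d hp
    have e2' : p.getVert (T.dist root u2) = u2 := desc_getVert hT hu2d hp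
    have hdu : T.dist root u1 = T.dist root u2 := by omega
    rw [hdu] at e1'
    have : u1 = u2 := e1'.symm.trans e2'
    rw [hu1e, hu2e, hv, this]
  refine ⟨⟨ι, hmaps, hinj⟩, ?_⟩
  have hfin1 : (T.edgeSet \ {e | ∀ x ∈ e, x ∈ halfCeil T root}).Finite := Set.toFinite _
  have h1 : edgesIn T (halfFloor T root) ≤
      (T.edgeSet \ {e | ∀ x ∈ e, x ∈ halfCeil T root}).ncard :=
    Set.ncard_le_ncard_of_injOn ι hmaps hinj hfin1
  have h2 : edgesIn T (halfCeil T root)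
      = (T.edgeSet ∩ {e | ∀ x ∈ e, x ∈ halfCeil T root}).ncard := rfl
  have h3 := Set.ncard_inter_add_ncard_diff_eq_ncard T.edgeSet
    {e | ∀ x ∈ e, x ∈ halfCeil T root} (Set.toFinite _)
  omega
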